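/- For every real number ε > 0, the periodic schedule |121123| (i.e., S(t) = 1 if t ≡ 0, 2, 3 (mod 6), S(t) = 2 if t ≡ 1, 4 (mod 6), and S(t) = 3 if t ≡ 5 (mod 6)) is valid for the real-valued pinwheel instance (2 + ε, 3, 6). -/

import Mathlib

/-- A schedule `S : ℤ → Fin k` is valid for the real-valued pinwheel instance
`a : Fin k → ℝ` if for every task `i`, every positive integer `l`, and every
integer `m`, task `i` is performed at least `l` times on the days
`t ∈ [m, m + ⌈l * a i⌉)`. -/
def PinValid {k : ℕ} (a : Fin k → ℝ) (S : ℤ → Fin k) : Prop :=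
  ∀ i : Fin k, ∀ l : ℕ, 0 < l → ∀ m : ℤ,
    (l : ℕ) ≤ ((Finset.Ico m (m + ⌈(l : ℝ) * a i⌉)).filter (fun t => S t = i)).card

/-- A real-valued pinwheel instance is schedulable if some schedule is valid for it. -/
def PinSchedulable {k : ℕ} (a : Fin k → ℝ) : Prop := ∃ S : ℤ → Fin k, PinValid a S

/-- The periodic schedule `|121123|`. -/
def S121123 : ℤ → Fin 3 := fun t =>
  if t % 6 = 5 then 2 else if t % 6 = 1 ∨ t % 6 = 4 then 1 else 0

namespace Pin121123

noncomputable def cnt (i : Fin 3) (m : ℤ) (n : ℕ) : ℕ :=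
  ((Finset.Ico m (m + (n : ℤ))).filter (fun t => S121123 t = i)).card

lemma cnt_add (i : Fin 3) (m : ℤ) (a b : ℕ) :
    cnt i m (a + b) = cnt i m a + cnt i (m + a) b := by
  unfold cnt
  rw [show (m + ((a + b : ℕ) : ℤ)) = (m + a) + b by push_cast; ring]
  rw [← Finset.Ico_union_Ico_eq_Ico (by omega : m ≤ m + (a : ℤ))
    (by omega : m + (a : ℤ) ≤ m + a + b)]
  rw [Finset.filter_union, Finset.card_union_of_disjoint]
  exact (Finset.Ico_disjoint_Ico_consecutive m (m + a) (m + a + b)).mono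
    (Finset.filter_subset _ _) (Finset.filter_subset _ _)

lemma cnt_mono (i : Fin 3) (m : ℤ) {a b : ℕ} (h : a ≤ b) : cnt i m a ≤ cnt i m b :=
  Finset.card_le_card (Finset.filter_subset_filter _
    (Finset.Ico_subset_Ico_right (by omega)))

lemma mem_cnt (i : Fin 3) (m : ℤ) (n : ℕ) (x : ℤ) (h1 : m ≤ x) (h2 : x < m + n)
    (h3 : S121123 x = i) :
    x ∈ (Finset.Ico m (m + (n : ℤ))).filter (fun t => S121123 t = i) := by
  simp [Finset.mem_Ico, h1, h2, h3]

lemma two_le {s : Finset ℤ} {x y : ℤ} (hx : x ∈ s) (hy : y ∈ s) (hxy : x ≠ y) :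
    2 ≤ s.card := by
  have hsub : ({x, y} : Finset ℤ) ⊆ s := by
    intro t ht; simp at ht; rcases ht with h | h <;> subst h <;> assumption
  have : ({x, y} : Finset ℤ).card = 2 := by
    rw [Finset.card_insert_of_notMem (by simp [hxy]), Finset.card_singleton]
  have := Finset.card_le_card hsub
  omega
lemma three_le {s : Finset ℤ} {x y z : ℤ} (hx : x ∈ s) (hy : y ∈ s) (hz : z ∈ s)
    (hxy : x ≠ y) (hxz : x ≠ z) (hyz : y ≠ z) : 3 ≤ s.card := by
  have hsub : ({x, y, z} : Finset ℤ) ⊆ s := by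
    intro t ht; simp at ht; rcases ht with h | h | h <;> subst h <;> assumption
  have : ({x, y, z} : Finset ℤ).card = 3 := by
    rw [Finset.card_insert_of_notMem (by simp [hxy, hxz]),
      Finset.card_insert_of_notMem (by simp [hyz]), Finset.card_singleton]
  have := Finset.card_le_card hsub
  omega

lemma S_eq2 {x : ℤ} (h : x % 6 = 5) : S121123 x = 2 := by simp [S121123, h]

lemma S_eq1 {x : ℤ} (h : x % 6 = 1 ∨ x % 6 = 4) : S121123 x = 1 := by
  rcases h with h | h <;> simp [S121123, h]

lemma S_eq0 {x : ℤ} (h : x % 6 = 0 ∨ x % 6 = 2 ∨ x % 6 = 3) : S121123 x = 0 := by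
  rcases h with h | h | h <;> simp [S121123, h]

lemma b2 (m : ℤ) : 1 ≤ cnt 2 m 6 :=
  Finset.card_pos.mpr ⟨m + (5 - m % 6) % 6,
    mem_cnt 2 m 6 _ (by omega) (by push_cast; omega) (S_eq2 (by omega))⟩

lemma b1 (m : ℤ) : 1 ≤ cnt 1 m 3 :=
  Finset.card_pos.mpr ⟨m + (1 - m % 3) % 3,
    mem_cnt 1 m 3 _ (by omega) (by push_cast; omega) (S_eq1 (by omega))⟩

lemma b0_3 (m : ℤ) : 1 ≤ cnt 0 m 3 := by
  have h : m % 6 = 0 ∨ m % 6 = 1 ∨ m % 6 = 2 ∨ m % 6 = 3 ∨ m % 6 = 4 ∨ m % 6 = 5 := by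
    omega
  rcases h with h | h | h | h | h | h
  · exact Finset.card_pos.mpr ⟨m, mem_cnt 0 m 3 _ (by omega) (by push_cast; omega) (S_eq0 (by omega))⟩
  · exact Finset.card_pos.mpr ⟨m + 1, mem_cnt 0 m 3 _ (by omega) (by push_cast; omega) (S_eq0 (by omega))⟩
  · exact Finset.card_pos.mpr ⟨m, mem_cnt 0 m 3 _ (by omega) (by push_cast; omega) (S_eq0 (by omega))⟩
  · exact Finset.card_pos.mpr ⟨m, mem_cnt 0 m 3 _ (by omega) (by push_cast; omega) (S_eq0 (by omega))⟩
  · exact Finset.card_pos.mpr ⟨m + 2, mem_cnt 0 m 3 _ (by omega) (by push_cast; omega) (S_eq0 (by omega))⟩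
  · exact Finset.card_pos.mpr ⟨m + 1, mem_cnt 0 m 3 _ (by omega) (by push_cast; omega) (S_eq0 (by omega))⟩

lemma b0_5 (m : ℤ) : 2 ≤ cnt 0 m 5 := by
  have h : m % 6 = 0 ∨ m % 6 = 1 ∨ m % 6 = 2 ∨ m % 6 = 3 ∨ m % 6 = 4 ∨ m % 6 = 5 := by
    omega
  rcases h with h | h | h | h | h | h
  · exact two_le
      (mem_cnt 0 m 5 (m + 0) (by omega) (by push_cast; omega) (S_eq0 (by omega)))
      (mem_cnt 0 m 5 (m + 2) (by omega) (by push_cast; omega) (S_eq0 (by omega)))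
      (by omega)
  · exact two_le
      (mem_cnt 0 m 5 (m + 1) (by omega) (by push_cast; omega) (S_eq0 (by omega)))
      (mem_cnt 0 m 5 (m + 2) (by omega) (by push_cast; omega) (S_eq0 (by omega)))
      (by omega)
  · exact two_le
      (mem_cnt 0 m 5 (m + 0) (by omega) (by push_cast; omega) (S_eq0 (by omega)))
      (mem_cnt 0 m 5 (m + 1) (by omega) (by push_cast; omega) (S_eq0 (by omega)))
      (by omega)
  · exact two_le
      (mem_cnt 0 m 5 (m + 0) (by omega) (by push_cast; omega) (S_eq0 (by omega)))
      (mem_cnt 0 m 5 (m + 3) (by omega) (by push_cast; omega) (S_eq0 (by omega)))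
      (by omega)
  · exact two_le
      (mem_cnt 0 m 5 (m + 2) (by omega) (by push_cast; omega) (S_eq0 (by omega)))
      (mem_cnt 0 m 5 (m + 4) (by omega) (by push_cast; omega) (S_eq0 (by omega)))
      (by omega)
  · exact two_le
      (mem_cnt 0 m 5 (m + 1) (by omega) (by push_cast; omega) (S_eq0 (by omega)))
      (mem_cnt 0 m 5 (m + 3) (by omega) (by push_cast; omega) (S_eq0 (by omega)))
      (by omega)

lemma b0_6 (m : ℤ) : 3 ≤ cnt 0 m 6 := by
  refine three_le
    (mem_cnt 0 m 6 (m + (0 - m % 6) % 6) (by omega) (by push_cast; omega) (S_eq0 (by omega)))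
    (mem_cnt 0 m 6 (m + (2 - m % 6) % 6) (by omega) (by push_cast; omega) (S_eq0 (by omega)))
    (mem_cnt 0 m 6 (m + (3 - m % 6) % 6) (by omega) (by push_cast; omega) (S_eq0 (by omega)))
    (by omega) (by omega) (by omega)

lemma task0 : ∀ l : ℕ, ∀ m : ℤ, l ≤ cnt 0 m (2 * l + 1) := by
  intro l
  induction l using Nat.strong_induction_on with
  | _ l ih =>
    intro m
    match l with
    | 0 => exact Nat.zero_le _
    | 1 => simpa using b0_3 m
    | 2 => simpa using b0_5 m
    | (n + 3) =>
      have h1 : cnt 0 m (6 + (2 * n + 1)) = cnt 0 m 6 + cnt 0 (m + 6) (2 * n + 1) := by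
        simpa using cnt_add 0 m 6 (2 * n + 1)
      have h2 := ih n (by omega) (m + 6)
      have h3 := b0_6 m
      have : 2 * (n + 3) + 1 = 6 + (2 * n + 1) := by ring
      rw [this, h1]
      omega

lemma task1 : ∀ l : ℕ, ∀ m : ℤ, l ≤ cnt 1 m (3 * l) := by
  intro l
  induction l with
  | zero => intro m; exact Nat.zero_le _
  | succ n ih =>
    intro m
    have h1 : cnt 1 m (3 + 3 * n) = cnt 1 m 3 + cnt 1 (m + 3) (3 * n) := by
      simpa using cnt_add 1 m 3 (3 * n)
    have : 3 * (n + 1) = 3 + 3 * n := by ring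
    rw [this, h1]
    have := b1 m
    have := ih (m + 3)
    omega

lemma task2 : ∀ l : ℕ, ∀ m : ℤ, l ≤ cnt 2 m (6 * l) := by
  intro l
  induction l with
  | zero => intro m; exact Nat.zero_le _
  | succ n ih =>
    intro m
    have h1 : cnt 2 m (6 + 6 * n) = cnt 2 m 6 + cnt 2 (m + 6) (6 * n) := by
      simpa using cnt_add 2 m 6 (6 * n)
    have : 6 * (n + 1) = 6 + 6 * n := by ring
    rw [this, h1]
    have := b2 m
    have := ih (m + 6)
    omega

end Pin121123

theorem valid_121123 (ε : ℝ) (hε : 0 < ε) :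
    PinValid ![(2 : ℝ) + ε, 3, 6] S121123 := by
  intro i l hl m
  fin_cases i
  · -- task 0, a = 2 + ε
    show l ≤ ((Finset.Ico m (m + ⌈(l : ℝ) * ((2 : ℝ) + ε)⌉)).filter
      (fun t => S121123 t = 0)).card
    have hceil : (2 * l + 1 : ℤ) ≤ ⌈(l : ℝ) * ((2 : ℝ) + ε)⌉ := by
      have h1 : ((2 * l : ℤ) : ℝ) < (l : ℝ) * ((2 : ℝ) + ε) := by
        have hl' : (1 : ℝ) ≤ (l : ℝ) := by exact_mod_cast hl
        push_cast
        nlinarith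
      have := Int.lt_ceil.mpr h1
      omega
    set N : ℕ := ⌈(l : ℝ) * ((2 : ℝ) + ε)⌉.toNat with hN
    have hNZ : ⌈(l : ℝ) * ((2 : ℝ) + ε)⌉ = (N : ℤ) := by
      rw [hN, Int.toNat_of_nonneg (by omega)]
    rw [hNZ]
    exact le_trans (Pin121123.task0 l m) (Pin121123.cnt_mono 0 m (by omega))
  · -- task 1, a = 3
    show l ≤ ((Finset.Ico m (m + ⌈(l : ℝ) * (3 : ℝ)⌉)).filter
      (fun t => S121123 t = 1)).card
    have hceil : ⌈(l : ℝ) * (3 : ℝ)⌉ = ((3 * l : ℕ) : ℤ) := by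
      rw [show (l : ℝ) * 3 = ((3 * l : ℕ) : ℝ) by push_cast; ring, Int.ceil_natCast]
    rw [hceil]
    exact Pin121123.task1 l m
  · -- task 2, a = 6
    have hceil : ⌈(l : ℝ) * (6 : ℝ)⌉ = ((6 * l : ℕ) : ℤ) := by
      rw [show (l : ℝ) * 6 = ((6 * l : ℕ) : ℝ) by push_cast; ring, Int.ceil_natCast]
    show l ≤ ((Finset.Ico m (m + ⌈(l : ℝ) * (6 : ℝ)⌉)).filter
      (fun t => S121123 t = 2)).card
    rw [hceil]
    exact Pin121123.task2 l m
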